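/- Let ℒ ⊂ ℝ^{n+1} be a lattice such that ℒ ∩ (ℝ^n × {0}) contains n linearly independent vectors, and set 𝓛̃ = P(ℒ ∩ (ℝ^n × {0})), 𝓛̃* = {k̃ ∈ ℝ^n : ⟨k̃,v⟩ ∈ ℤ for all v ∈ 𝓛̃}, and 𝒳_𝓛̃ the ℂ-linear span of {ω_{k̃} : k̃ ∈ 𝓛̃*}. Then there exists a countable set K ⊂ ℝ (namely K = ⋃ {(1/z)·ℤ : (k̃,z) ∈ ℒ*, z ≠ 0}) such that for every y0 > 0 with y0 ∉ K, one has Π_{y0}(𝒳_ℒ) = 𝒳_𝓛̃; in particular this equality holds for almost all y0. -/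

import Mathlib

/-!
For `k = (k̃, z)` one has `Π_{y0} ω_k = c(z) ω_{k̃}` with `c(z) = ∫₀^{y0} e^{2πizy} dy`, and `c(z)`
vanishes only when `z y0` is a nonzero integer. Hence for `y0 ∉ K` the image `Π_{y0}(𝒳_ℒ)` is
the span of the `ω_{k̃}` with `k̃ ∈ P(ℒ*)`, and it remains to see that `P(ℒ*) = 𝓛̃*`.
Since `ℒ ∩ (ℝⁿ × {0})` has rank `n`, the heights `(b j).2` of a basis of `ℒ` are orthogonal to `n`
independent integer vectors, hence a real multiple of an integer vector; so the heights of the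
points of `ℒ` form a cyclic group `hℤ`. Given `k̃ ∈ 𝓛̃*` and `l₀ ∈ ℒ` of height `h`, the choice
`z = -⟨k̃, P l₀⟩ / h` makes `(k̃, z)` integral on `l₀` and on `ℒ ∩ (ℝⁿ × {0})`, hence on all of `ℒ`.
-/

open MeasureTheory
open scoped Classical

noncomputable section

/-- The Euclidean dot product on `ℝⁿ`. -/
def dotn {n : ℕ} (a b : Fin n → ℝ) : ℝ := ∑ i, a i * b i

/-- `ℝ^{n+1}` viewed as `ℝⁿ × ℝ`, points written `(x, y)`. -/
abbrev V1 (n : ℕ) := (Fin n → ℝ) × ℝ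

/-- The standard inner product on `ℝ^{n+1} = ℝⁿ × ℝ`. -/
def dot1 {n : ℕ} (k p : V1 n) : ℝ := dotn k.1 p.1 + k.2 * p.2

/-- `e^{2πit}`. -/
def expz (t : ℝ) : ℂ := Complex.exp (2 * (Real.pi : ℂ) * Complex.I * (t : ℂ))

/-- The wave `ω_k` on `ℝ^{n+1}`. -/
def wave {n : ℕ} (k : V1 n) : V1 n → ℂ := fun p => expz (dot1 k p)

/-- The wave `ω_k̃` on `ℝⁿ`. -/
def waveN {n : ℕ} (k : Fin n → ℝ) : (Fin n → ℝ) → ℂ := fun x => expz (dotn k x)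

/-- The projection operator `Π_{y0}`. -/
def Proj {n : ℕ} (y0 : ℝ) (f : V1 n → ℂ) : (Fin n → ℝ) → ℂ :=
  fun x => ∫ y in (0:ℝ)..y0, f (x, y)

/-- The lattice generated over `ℤ` by the vectors `b i`. -/
def latticeOf {n : ℕ} (b : Fin (n+1) → V1 n) : Set (V1 n) :=
  {v | ∃ c : Fin (n+1) → ℤ, v = ∑ i, (c i : ℝ) • b i}

/-- The dual lattice `ℒ*` of a subset of `ℝ^{n+1}`. -/
def dualLat {n : ℕ} (L : Set (V1 n)) : Set (V1 n) :=
  {k | ∀ l ∈ L, ∃ m : ℤ, dot1 k l = (m : ℝ)}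

/-- The dual lattice of a subset of `ℝⁿ`. -/
def dualN {n : ℕ} (Lt : Set (Fin n → ℝ)) : Set (Fin n → ℝ) :=
  {k | ∀ v ∈ Lt, ∃ m : ℤ, dotn k v = (m : ℝ)}

/-- `𝒳_ℒ`: the ℂ-linear span of the waves `ω_k`, `k ∈ ℒ*`. -/
def XL {n : ℕ} (L : Set (V1 n)) : Submodule ℂ (V1 n → ℂ) :=
  Submodule.span ℂ (wave '' dualLat L)

/-- The ℂ-linear span of the waves `ω_k̃`, `k̃` in the dual of a planar lattice. -/
def XN {n : ℕ} (Lt : Set (Fin n → ℝ)) : Submodule ℂ ((Fin n → ℝ) → ℂ) :=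
  Submodule.span ℂ (waveN '' dualN Lt)

/-- Membership in `O(n)`: a linear automorphism of `ℝⁿ` preserving the dot product. -/
def IsOrthoN {n : ℕ} (α : (Fin n → ℝ) ≃ₗ[ℝ] (Fin n → ℝ)) : Prop :=
  ∀ a b, dotn (α a) (α b) = dotn a b

/-- Membership in `O(n+1)`: a linear automorphism of `ℝ^{n+1}` preserving the inner product. -/
def IsOrtho1 {n : ℕ} (δ : V1 n ≃ₗ[ℝ] V1 n) : Prop :=
  ∀ a b, dot1 (δ a) (δ b) = dot1 a b

/-- The holohedry `H_ℒ`: orthogonal transformations mapping `ℒ` to itself. -/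
def HolL {n : ℕ} (L : Set (V1 n)) : Set (V1 n ≃ₗ[ℝ] V1 n) :=
  {γ | IsOrtho1 γ ∧ (⇑γ) '' L = L}

/-- `α₊`: acts as `α` on `ℝⁿ` and `+1` on the last coordinate. -/
def aPlus {n : ℕ} (α : (Fin n → ℝ) ≃ₗ[ℝ] (Fin n → ℝ)) : V1 n ≃ₗ[ℝ] V1 n :=
  α.prodCongr (LinearEquiv.refl ℝ ℝ)

/-- `α₋`: acts as `α` on `ℝⁿ` and `−1` on the last coordinate. -/
def aMinus {n : ℕ} (α : (Fin n → ℝ) ≃ₗ[ℝ] (Fin n → ℝ)) : V1 n ≃ₗ[ℝ] V1 n :=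
  α.prodCongr (LinearEquiv.neg ℝ)

/-- The group `J̃` of induced orthogonal symmetries. -/
def Jt {n : ℕ} (L : Set (V1 n)) (y0 : ℝ) : Set ((Fin n → ℝ) ≃ₗ[ℝ] (Fin n → ℝ)) :=
  {α | IsOrthoN α ∧
    (aPlus α ∈ HolL L ∨ ((((0 : Fin n → ℝ), y0) : V1 n) ∈ L ∧ aMinus α ∈ HolL L))}

/-- The subset `J̃↑` of `H_ℒ`. -/
def Jup {n : ℕ} (L : Set (V1 n)) (y0 : ℝ) : Set (V1 n ≃ₗ[ℝ] V1 n) :=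
  {γ | ∃ α ∈ Jt L y0,
    (γ = aPlus α ∧ aPlus α ∈ HolL L) ∨ (γ = aMinus α ∧ aMinus α ∈ HolL L)}

/-- The set `J^α_k = {δ ∈ H_ℒ : P(δk) = α k̃}`. -/
def Jset {n : ℕ} (L : Set (V1 n)) (k : V1 n) (α : (Fin n → ℝ) ≃ₗ[ℝ] (Fin n → ℝ)) :
    Set (V1 n ≃ₗ[ℝ] V1 n) :=
  {δ ∈ HolL L | (δ k).1 = α k.1}

/-- The set `J^{Id}_k = {δ ∈ H_ℒ : P(δk) = k̃}`. -/
def JId {n : ℕ} (L : Set (V1 n)) (k : V1 n) : Set (V1 n ≃ₗ[ℝ] V1 n) :=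
  {δ ∈ HolL L | (δ k).1 = k.1}

/-- The set `S_k = ⋃_{α ∈ J̃} J^α_k`. -/
def Sk {n : ℕ} (L : Set (V1 n)) (y0 : ℝ) (k : V1 n) : Set (V1 n ≃ₗ[ℝ] V1 n) :=
  ⋃ α ∈ Jt L y0, Jset L k α

/-- The isotropy subgroup `Σ_k` of `k` in `H_ℒ`. -/
def Sigk {n : ℕ} (L : Set (V1 n)) (k : V1 n) : Set (V1 n ≃ₗ[ℝ] V1 n) :=
  {δ ∈ HolL L | δ k = k}

/-- The orbit `H_ℒ·k`. -/
def HOrb {n : ℕ} (L : Set (V1 n)) (k : V1 n) : Set (V1 n) :=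
  (fun δ : V1 n ≃ₗ[ℝ] V1 n => δ k) '' HolL L

/-- The orbit `J̃·u`. -/
def JOrb {n : ℕ} (L : Set (V1 n)) (y0 : ℝ) (u : Fin n → ℝ) : Set (Fin n → ℝ) :=
  (fun α : (Fin n → ℝ) ≃ₗ[ℝ] (Fin n → ℝ) => α u) '' Jt L y0

/-- The single mode `V`: the ℂ-span of the waves `ω_{δk}`, `δ ∈ H_ℒ`. -/
def modeV {n : ℕ} (L : Set (V1 n)) (k : V1 n) : Submodule ℂ (V1 n → ℂ) :=
  Submodule.span ℂ ((fun δ : V1 n ≃ₗ[ℝ] V1 n => wave (δ k)) '' HolL L)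

/-- The projected lattice `𝓛̃`. -/
def projLat {n : ℕ} (L : Set (V1 n)) (y0 : ℝ) : Set (Fin n → ℝ) :=
  if (((0 : Fin n → ℝ), y0) : V1 n) ∈ L then Prod.fst '' L
  else Prod.fst '' (L ∩ {p : V1 n | p.2 = 0})

open Set Submodule Matrix

theorem image_span_eq_span_image_of_linearOn {R M N : Type*} [Semiring R] [AddCommMonoid M]
    [Module R M] [AddCommMonoid N] [Module R N] (p : Submodule R M) {s : Set M}
    (hs : s ⊆ p) {f : M → N} (hadd : ∀ x ∈ p, ∀ y ∈ p, f (x + y) = f x + f y)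
    (hsmul : ∀ (c : R), ∀ x ∈ p, f (c • x) = c • f x) :
    f '' span R s = span R (f '' s) := by
  let g : p →ₗ[R] N :=
    { toFun := fun x => f x
      map_add' := fun x y => hadd x x.2 y y.2
      map_smul' := fun c x => hsmul c x x.2 }
  have hval : ((↑) : p → M) '' ((↑) ⁻¹' s) = s :=
    image_preimage_eq_of_subset (by rwa [Subtype.range_coe_subtype])
  have hspan : span R s = (span R ((↑) ⁻¹' s : Set p)).map p.subtype := by
    rw [map_span, Submodule.coe_subtype, hval]
  have himage : f '' s = g '' ((↑) ⁻¹' s : Set p) := by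
    nth_rw 1 [← hval]
    rw [image_image]
    rfl
  rw [himage, ← map_span, hspan, map_coe, map_coe, image_image]
  rfl

theorem Matrix.exists_mulVec_eq_zero_of_fin_succ {R : Type*} [CommRing R] [IsDomain R] {n : ℕ}
    (A : Matrix (Fin n) (Fin (n+1)) R) : ∃ v ≠ 0, A *ᵥ v = 0 := by
  let A' : Matrix (Fin (n+1)) (Fin (n+1)) R := Fin.snoc (fun i => A i) 0
  obtain ⟨v, hv, hA'v⟩ := A'.exists_mulVec_eq_zero_iff.2
    (Matrix.det_eq_zero_of_row_eq_zero (Fin.last n) fun j => by simp [A'])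
  exact ⟨v, hv, funext fun i => by simpa [A', Matrix.mulVec] using congrFun hA'v i.castSucc⟩

theorem Matrix.exists_smul_eq_of_mulVec_eq_zero {K : Type*} [Field K] {n : ℕ}
    {A : Matrix (Fin n) (Fin (n+1)) K} (hA : LinearIndependent K A) {p q : Fin (n+1) → K}
    (hp : p ≠ 0) (hAp : A *ᵥ p = 0) (hAq : A *ᵥ q = 0) : ∃ t : K, t • p = q := by
  have hrank : A.rank = n := by
    rw [A.rank_eq_finrank_span_row, finrank_span_eq_card (b := A.row) hA, Fintype.card_fin]
  have hker : Module.finrank K (LinearMap.ker A.mulVecLin) = 1 := by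
    have := LinearMap.finrank_range_add_finrank_ker A.mulVecLin
    rw [← Matrix.rank, hrank, Module.finrank_fin_fun] at this
    omega
  obtain ⟨t, ht⟩ := (finrank_eq_one_iff_of_nonzero' (⟨p, hAp⟩ : LinearMap.ker A.mulVecLin)
    fun h => hp (congrArg Subtype.val h)).1 hker ⟨q, hAq⟩
  exact ⟨t, congrArg Subtype.val ht⟩

theorem AddMonoidHom.exists_map_ne_zero_dvd {Λ : Type*} [AddCommGroup Λ] {P : Λ →+ ℤ}
    (hP : P ≠ 0) : ∃ l0, P l0 ≠ 0 ∧ ∀ l, P l0 ∣ P l := by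
  obtain ⟨a, ha⟩ := Int.subgroup_cyclic P.range
  obtain ⟨l0, rfl⟩ : a ∈ P.range := ha ▸ AddSubgroup.subset_closure rfl
  have hdvd : ∀ l, P l0 ∣ P l := fun l => by
    have hl : P l ∈ AddSubgroup.closure {P l0} := ha ▸ AddMonoidHom.mem_range.2 ⟨l, rfl⟩
    obtain ⟨k, hk⟩ := AddSubgroup.mem_closure_singleton.1 hl
    exact ⟨k, by rw [← hk, smul_eq_mul, mul_comm]⟩
  refine ⟨l0, fun h0 => hP (AddMonoidHom.ext fun l => ?_), hdvd⟩
  obtain ⟨k, hk⟩ := hdvd l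
  simp [hk, h0]

theorem AddMonoidHom.exists_add_mul_int_valued {Λ : Type*} [AddCommGroup Λ] (f g : Λ →+ ℝ)
    {l0 : Λ} (hl0 : f l0 ≠ 0) (hgen : ∀ l, ∃ m : ℤ, f l = m * f l0)
    (hker : ∀ l, f l = 0 → ∃ m : ℤ, g l = m) : ∃ z : ℝ, ∀ l, ∃ m : ℤ, g l + z * f l = m := by
  refine ⟨-g l0 / f l0, fun l => ?_⟩
  obtain ⟨m, hm⟩ := hgen l
  obtain ⟨m', hm'⟩ := hker (l - m • l0) (by rw [map_sub, map_zsmul, hm, zsmul_eq_mul, sub_self])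
  refine ⟨m', ?_⟩
  rw [← hm', map_sub, map_zsmul, zsmul_eq_mul, hm]
  field_simp
  ring

theorem countable_setOf_int_div_snd {α : Type*} {D : Set (α × ℝ)} (hD : D.Countable) :
    {t : ℝ | ∃ k ∈ D, k.2 ≠ 0 ∧ ∃ m : ℤ, t = (m : ℝ) / k.2}.Countable := by
  refine (hD.biUnion fun k _ => countable_range fun m : ℤ => (m : ℝ) / k.2).mono ?_
  rintro t ⟨k, hk, -, m, rfl⟩
  exact mem_biUnion hk ⟨m, rfl⟩

section DotProduct

variable {n : ℕ}

theorem dotn_eq_dotProduct (a b : Fin n → ℝ) : dotn a b = a ⬝ᵥ b := rfl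

def dot1Bilin : V1 n →ₗ[ℝ] V1 n →ₗ[ℝ] ℝ :=
  LinearMap.mk₂ ℝ dot1
    (fun k k' p => by simp only [dot1, dotn_eq_dotProduct, Prod.fst_add, Prod.snd_add,
      add_dotProduct]; ring)
    (fun c k p => by simp only [dot1, dotn_eq_dotProduct, Prod.smul_fst, Prod.smul_snd,
      smul_dotProduct, smul_eq_mul]; ring)
    (fun k p p' => by simp only [dot1, dotn_eq_dotProduct, Prod.fst_add, Prod.snd_add,
      dotProduct_add]; ring)
    (fun c k p => by simp only [dot1, dotn_eq_dotProduct, Prod.smul_fst, Prod.smul_snd,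
      dotProduct_smul, smul_eq_mul]; ring)

theorem dot1_self_eq_zero {d : V1 n} : dot1 d d = 0 ↔ d = 0 := by
  have h1 : 0 ≤ d.1 ⬝ᵥ d.1 := Fintype.sum_nonneg fun i => mul_self_nonneg (d.1 i)
  rw [dot1, dotn_eq_dotProduct, add_eq_zero_iff_of_nonneg h1 (mul_self_nonneg _),
    dotProduct_self_eq_zero, mul_self_eq_zero, Prod.ext_iff]
  rfl

end DotProduct

section Lattice

variable {n : ℕ}

def latticeCoords (b : Fin (n+1) → V1 n) : (Fin (n+1) → ℤ) →+ V1 n :=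
  AddMonoidHom.mk' (fun c => ∑ i, (c i : ℝ) • b i) fun c c' => by
    simp only [Pi.add_apply, Int.cast_add, add_smul, Finset.sum_add_distrib]

theorem latticeOf_eq_range (b : Fin (n+1) → V1 n) : latticeOf b = range (latticeCoords b) := by
  ext v
  simp [latticeOf, latticeCoords, eq_comm]

theorem basis_mem_latticeOf (b : Fin (n+1) → V1 n) (j : Fin (n+1)) : b j ∈ latticeOf b :=
  ⟨Pi.single j 1, by simp [Pi.single_apply]⟩

theorem countable_dualLat_latticeOf {b : Fin (n+1) → V1 n} (hb : LinearIndependent ℝ b) :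
    (dualLat (latticeOf b)).Countable := by
  let F : V1 n →ₗ[ℝ] Fin (n+1) → ℝ := LinearMap.pi fun j => dot1Bilin.flip (b j)
  have hspan : span ℝ (range b) = ⊤ := hb.span_eq_top_of_card_eq_finrank (by simp)
  have hF : Function.Injective F := by
    rw [← LinearMap.ker_eq_bot, LinearMap.ker_eq_bot']
    intro k hk
    have : dot1Bilin k = 0 := LinearMap.ext_on_range hspan fun j => congrFun hk j
    exact dot1_self_eq_zero.1 (LinearMap.congr_fun this k)
  refine ((countable_range fun c : Fin (n+1) → ℤ => ((↑) ∘ c : Fin (n+1) → ℝ)).preimage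
    hF).mono fun k hk => ?_
  choose m hm using fun j => hk (b j) (basis_mem_latticeOf b j)
  exact ⟨m, funext fun j => (hm j).symm⟩

end Lattice

section Waves

variable {n : ℕ}

theorem expz_add (s t : ℝ) : expz (s + t) = expz s * expz t := by
  rw [expz, expz, expz, ← Complex.exp_add]
  push_cast
  ring_nf

theorem expz_eq_one_iff (t : ℝ) : expz t = 1 ↔ ∃ m : ℤ, t = m := by
  rw [expz, Complex.exp_eq_one_iff]
  refine exists_congr fun m => ⟨fun h => ?_, fun h => by rw [h]; push_cast; ring⟩
  have h' : (t : ℂ) * (2 * Real.pi * Complex.I) = m * (2 * Real.pi * Complex.I) := by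
    rw [← h]; ring
  exact_mod_cast mul_right_cancel₀ Complex.two_pi_I_ne_zero h'

theorem continuous_expz : Continuous expz := by
  unfold expz
  fun_prop

theorem wave_mk (k : V1 n) (x : Fin n → ℝ) (y : ℝ) :
    wave k (x, y) = waveN k.1 x * expz (k.2 * y) :=
  expz_add _ _

theorem integral_expz_mul_ne_zero {y0 z : ℝ} (hy0 : y0 ≠ 0)
    (hz : z ≠ 0 → ∀ m : ℤ, z * y0 ≠ m) : ∫ y in (0:ℝ)..y0, expz (z * y) ≠ 0 := by
  rcases eq_or_ne z 0 with rfl | hz0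
  · simpa [expz] using hy0
  have hc : 2 * (Real.pi : ℂ) * Complex.I * z ≠ 0 :=
    mul_ne_zero Complex.two_pi_I_ne_zero (Complex.ofReal_ne_zero.2 hz0)
  have hexp : ∀ y : ℝ, expz (z * y) = Complex.exp (2 * Real.pi * Complex.I * z * y) := by
    intro y
    rw [expz]
    push_cast
    ring_nf
  simp_rw [hexp, integral_exp_mul_complex hc, Complex.ofReal_zero, mul_zero, Complex.exp_zero, ← hexp]
  refine div_ne_zero (sub_ne_zero.2 fun h => ?_) hc
  obtain ⟨m, hm⟩ := (expz_eq_one_iff (z * y0)).1 h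
  exact hz hz0 m hm

theorem proj_wave (y0 : ℝ) (k : V1 n) :
    Proj y0 (wave k) = (∫ y in (0:ℝ)..y0, expz (k.2 * y)) • waveN k.1 := by
  funext x
  simp only [Proj, wave_mk, intervalIntegral.integral_const_mul, Pi.smul_apply, smul_eq_mul,
    mul_comm]

end Waves

section Projection

variable {n : ℕ}

def intervalIntegrableSections (y0 : ℝ) : Submodule ℂ (V1 n → ℂ) where
  carrier := {f | ∀ x, IntervalIntegrable (fun y => f (x, y)) volume 0 y0}
  add_mem' hf hg x := (hf x).add (hg x)
  zero_mem' _ := intervalIntegrable_const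
  smul_mem' c _ hf x := (hf x).smul c

theorem wave_mem_intervalIntegrableSections (y0 : ℝ) (k : V1 n) :
    wave k ∈ intervalIntegrableSections y0 := fun _ => by
  simp only [wave_mk]
  exact (continuous_const.mul (continuous_expz.comp (continuous_const.mul continuous_id)))
    |>.intervalIntegrable 0 y0

theorem proj_add {y0 : ℝ} {f g : V1 n → ℂ} (hf : f ∈ intervalIntegrableSections y0)
    (hg : g ∈ intervalIntegrableSections y0) : Proj y0 (f + g) = Proj y0 f + Proj y0 g :=
  funext fun x => intervalIntegral.integral_add (hf x) (hg x)

theorem proj_smul (y0 : ℝ) (c : ℂ) (f : V1 n → ℂ) : Proj y0 (c • f) = c • Proj y0 f :=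
  funext fun _ => intervalIntegral.integral_smul c _

theorem fst_mem_dualN {L : Set (V1 n)} {k : V1 n} (hk : k ∈ dualLat L) :
    k.1 ∈ dualN (Prod.fst '' (L ∩ {p : V1 n | p.2 = 0})) := by
  rintro _ ⟨l, ⟨hl, hl0⟩, rfl⟩
  obtain ⟨m, hm⟩ := hk l hl
  exact ⟨m, by rw [← hm, dot1, show l.2 = 0 from hl0, mul_zero, add_zero]⟩

theorem span_image_proj_wave (L : Set (V1 n)) (y0 : ℝ)
    (hne : ∀ k ∈ dualLat L, ∫ y in (0:ℝ)..y0, expz (k.2 * y) ≠ 0)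
    (hlift : ∀ u ∈ dualN (Prod.fst '' (L ∩ {p : V1 n | p.2 = 0})), ∃ z, (u, z) ∈ dualLat L) :
    span ℂ (Proj y0 '' (wave '' dualLat L)) = XN (Prod.fst '' (L ∩ {p : V1 n | p.2 = 0})) := by
  refine le_antisymm (span_le.2 ?_) (span_le.2 ?_)
  · rintro _ ⟨_, ⟨k, hk, rfl⟩, rfl⟩
    rw [proj_wave]
    exact smul_mem _ _ (subset_span ⟨k.1, fst_mem_dualN hk, rfl⟩)
  · rintro _ ⟨u, hu, rfl⟩
    obtain ⟨z, hz⟩ := hlift u hu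
    have hwave : waveN u = (∫ y in (0:ℝ)..y0, expz (z * y))⁻¹ • Proj y0 (wave (u, z)) := by
      rw [proj_wave, smul_smul, inv_mul_cancel₀ (hne _ hz), one_smul]
    rw [hwave]
    exact smul_mem _ _ (subset_span ⟨_, ⟨_, hz, rfl⟩, rfl⟩)

theorem image_proj_XL (L : Set (V1 n)) (y0 : ℝ) :
    Proj y0 '' (XL L : Set (V1 n → ℂ)) = span ℂ (Proj y0 '' (wave '' dualLat L)) :=
  image_span_eq_span_image_of_linearOn (intervalIntegrableSections y0)
    (by rintro _ ⟨k, -, rfl⟩; exact wave_mem_intervalIntegrableSections y0 k)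
    (fun _ hf _ hg => proj_add hf hg) (fun c f _ => proj_smul y0 c f)

end Projection

section Lift

variable {n : ℕ}

theorem exists_snd_eq_mul_int {b : Fin (n+1) → V1 n} (hb : LinearIndependent ℝ b)
    (hslice : ∃ w : Fin n → V1 n, (∀ i, w i ∈ latticeOf b ∧ (w i).2 = 0) ∧
      LinearIndependent ℝ fun i => (w i).1) :
    ∃ (t : ℝ) (p : Fin (n+1) → ℤ), t ≠ 0 ∧ p ≠ 0 ∧ ∀ j, (b j).2 = t * p j := by
  obtain ⟨w, hw, hwli⟩ := hslice
  choose A hA using fun i => (hw i).1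
  let Aℝ : Matrix (Fin n) (Fin (n+1)) ℝ := (Matrix.of A).map (↑)
  have hAsnd : Aℝ *ᵥ (fun j => (b j).2) = 0 := funext fun i => by
    simpa [Aℝ, Matrix.mulVec, dotProduct, hA i, Prod.snd_sum] using (hw i).2
  have hAli : LinearIndependent ℝ Aℝ := by
    refine LinearIndependent.of_comp (LinearMap.fst ℝ _ ℝ ∘ₗ Fintype.linearCombination ℝ b) ?_
    convert hwli using 1
    funext i
    show (Fintype.linearCombination ℝ b (Aℝ i)).1 = (w i).1
    simp [Aℝ, hA i, Fintype.linearCombination_apply, Prod.fst_sum]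
  have hsnd : (fun j => (b j).2) ≠ 0 := by
    intro h0
    have : LinearIndependent ℝ fun j => (b j).1 := by
      refine LinearIndependent.of_comp (LinearMap.inl ℝ _ ℝ) ?_
      convert hb using 1
      funext j
      exact Prod.ext rfl (congrFun h0 j).symm
    simpa using this.fintype_card_le_finrank
  obtain ⟨p, hp, hAp⟩ := (Matrix.of A).exists_mulVec_eq_zero_of_fin_succ
  have hAℝp : Aℝ *ᵥ ((↑) ∘ p) = 0 := funext fun i => by
    simpa [hAp] using (RingHom.map_mulVec (Int.castRingHom ℝ) (Matrix.of A) p i).symm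
  obtain ⟨t, ht⟩ := Matrix.exists_smul_eq_of_mulVec_eq_zero hAli
    (fun h => hp (funext fun j => by simpa using congrFun h j)) hAℝp hAsnd
  refine ⟨t, p, ?_, hp, fun j => (congrFun ht j).symm⟩
  rintro rfl
  exact hsnd (by rw [← ht, zero_smul])

theorem exists_mk_mem_dualLat_latticeOf {b : Fin (n+1) → V1 n} (hb : LinearIndependent ℝ b)
    (hslice : ∃ w : Fin n → V1 n, (∀ i, w i ∈ latticeOf b ∧ (w i).2 = 0) ∧
      LinearIndependent ℝ fun i => (w i).1)
    {u : Fin n → ℝ} (hu : u ∈ dualN (Prod.fst '' (latticeOf b ∩ {p : V1 n | p.2 = 0}))) :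
    ∃ z : ℝ, (u, z) ∈ dualLat (latticeOf b) := by
  obtain ⟨t, p, ht, hp, hbp⟩ := exists_snd_eq_mul_int hb hslice
  let f : (Fin (n+1) → ℤ) →+ ℝ := (AddMonoidHom.snd _ ℝ).comp (latticeCoords b)
  let g : (Fin (n+1) → ℤ) →+ ℝ := AddMonoidHom.mk' (fun c => dotn u (latticeCoords b c).1)
    fun c c' => by simp [dotn_eq_dotProduct, dotProduct_add]
  let P : (Fin (n+1) → ℤ) →+ ℤ := AddMonoidHom.mk' (· ⬝ᵥ p) fun c c' => add_dotProduct c c' p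
  have hfP : ∀ c, f c = t * P c := fun c => by
    simp [f, P, latticeCoords, Prod.snd_sum, hbp, dotProduct, Finset.mul_sum, mul_left_comm]
  have hP : P ≠ 0 := fun h => by
    obtain ⟨j, hj⟩ := Function.ne_iff.1 hp
    exact hj (by simpa [P] using DFunLike.congr_fun h (Pi.single j 1))
  obtain ⟨c0, hc0, hdvd⟩ := AddMonoidHom.exists_map_ne_zero_dvd hP
  obtain ⟨z, hz⟩ := AddMonoidHom.exists_add_mul_int_valued f g
    (by rw [hfP]; exact mul_ne_zero ht (Int.cast_ne_zero.2 hc0))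
    (fun c => by obtain ⟨k, hk⟩ := hdvd c; exact ⟨k, by rw [hfP, hfP, hk]; push_cast; ring⟩)
    (fun c hc => hu _ ⟨latticeCoords b c, ⟨⟨c, rfl⟩, hc⟩, rfl⟩)
  refine ⟨z, ?_⟩
  rw [latticeOf_eq_range]
  rintro _ ⟨c, rfl⟩
  exact hz c

end Lift

theorem stmt_6_general (n : ℕ) (b : Fin (n+1) → V1 n) (hb : LinearIndependent ℝ b)
    (hslice : ∃ w : Fin n → V1 n, (∀ i, w i ∈ latticeOf b ∧ (w i).2 = 0) ∧
      LinearIndependent ℝ fun i => (w i).1) :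
    ∃ K : Set ℝ,
      K = {t : ℝ | ∃ k ∈ dualLat (latticeOf b), k.2 ≠ 0 ∧ ∃ m : ℤ, t = (m : ℝ) / k.2} ∧
      K.Countable ∧
      ∀ y0 : ℝ, 0 < y0 → y0 ∉ K →
        Proj y0 '' (XL (latticeOf b) : Set (V1 n → ℂ)) =
          (XN (Prod.fst '' (latticeOf b ∩ {p : V1 n | p.2 = 0})) :
            Set ((Fin n → ℝ) → ℂ)) := by
  refine ⟨_, rfl, countable_setOf_int_div_snd (countable_dualLat_latticeOf hb),
    fun y0 hy0 hK => ?_⟩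
  have hne : ∀ k ∈ dualLat (latticeOf b), ∫ y in (0:ℝ)..y0, expz (k.2 * y) ≠ 0 :=
    fun k hk => integral_expz_mul_ne_zero hy0.ne' fun hk2 m hm =>
      hK ⟨k, hk, hk2, m, by rw [← hm, mul_div_cancel_left₀ _ hk2]⟩
  rw [image_proj_XL, span_image_proj_wave _ _ hne fun u hu =>
    exists_mk_mem_dualLat_latticeOf hb hslice hu]

/-- if `ℒ ∩ (ℝⁿ × {0})` contains `n` linearly independent vectors, there is a
countable set `K = ⋃ {(1/z)ℤ : (k̃,z) ∈ ℒ*, z ≠ 0}` such that `Π_{y0}(𝒳_ℒ) = 𝒳_𝓛̃`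
for every `y0 > 0` outside `K`. -/
theorem stmt_6 (n : ℕ) (hn : 1 ≤ n) (b : Fin (n+1) → V1 n) (hb : LinearIndependent ℝ b)
    (hslice : ∃ w : Fin n → V1 n, (∀ i, w i ∈ latticeOf b ∧ (w i).2 = 0) ∧
      LinearIndependent ℝ fun i => (w i).1) :
    ∃ K : Set ℝ,
      K = {t : ℝ | ∃ k ∈ dualLat (latticeOf b), k.2 ≠ 0 ∧ ∃ m : ℤ, t = (m : ℝ) / k.2} ∧
      K.Countable ∧
      ∀ y0 : ℝ, 0 < y0 → y0 ∉ K →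
        Proj y0 '' (XL (latticeOf b) : Set (V1 n → ℂ)) =
          (XN (Prod.fst '' (latticeOf b ∩ {p : V1 n | p.2 = 0})) :
            Set ((Fin n → ℝ) → ℂ)) :=
  stmt_6_general n b hb hslice

end
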